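/- For the Argon2i-B parent distribution where Pr[r(i)=j] = √(1−(j−1)/i) − √(1−j/i), the probability that a node v in layer i (layers of size N/λ) has its random parent in the same layer is at most √(1/i) − √(λ/(iN)); summing over layers, the expected number of such nodes is at most (N/λ − √(N/λ))·(2√λ − 1) ≤ 2N/√λ. -/

import Mathlib

open MeasureTheory

/-- The index of the layer (of size `m`) containing node `v`, i.e. `⌈v/m⌉`. -/
def layerIdx (m v : ℕ) : ℕ := (v + m - 1) / m

lemma teleAux (g : ℕ → ℝ) (a : ℕ) : ∀ b, a ≤ b →
    ∑ j ∈ Finset.Icc (a+1) b, (g (j-1) - g j) = g a - g b := by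
  intro b
  induction b with
  | zero => intro h; interval_cases a; simp
  | succ n ih =>
    intro h
    rcases Nat.lt_or_ge a (n+1) with h' | h'
    · have ha : a ≤ n := by omega
      rw [Finset.sum_Icc_succ_top (by omega), ih ha]
      push_cast
      ring
    · have : a = n + 1 := by omega
      subst this; simp

lemma sumInvSqrt : ∀ l : ℕ, 1 ≤ l →
    ∑ i ∈ Finset.Icc 1 l, (Real.sqrt i)⁻¹ ≤ 2 * Real.sqrt l - 1 := by
  intro l
  induction l with
  | zero => omega
  | succ n ih =>
    intro _
    rcases Nat.lt_or_ge n 1 with h | h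
    · interval_cases n
      norm_num
    · rw [Finset.sum_Icc_succ_top (by omega)]
      have hs : Real.sqrt n ≤ Real.sqrt (n+1) := by
        apply Real.sqrt_le_sqrt; push_cast; linarith
      have hn : (1:ℝ) ≤ Real.sqrt n := by
        rw [show (1:ℝ) = Real.sqrt 1 by simp]
        apply Real.sqrt_le_sqrt; exact_mod_cast h
      have h1 : (0:ℝ) < Real.sqrt (n+1) := by linarith
      have key : (Real.sqrt ((n:ℕ)+1 : ℕ))⁻¹ ≤ 2 * Real.sqrt ((n:ℝ)+1) - 2 * Real.sqrt n := by
        have e1 : ((((n:ℕ)+1:ℕ)):ℝ) = (n:ℝ)+1 := by push_cast; ring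
        rw [e1]
        rw [inv_le_iff_one_le_mul₀ h1]
        have e2 : Real.sqrt ((n:ℝ)+1) * Real.sqrt ((n:ℝ)+1) = (n:ℝ)+1 :=
          Real.mul_self_sqrt (by positivity)
        have e3 : Real.sqrt n * Real.sqrt n = (n:ℝ) := Real.mul_self_sqrt (by positivity)
        nlinarith [hs, hn]
      have := ih h
      push_cast at key ⊢
      linarith


lemma layerFacts (m lam v : ℕ) (hm : 1 ≤ m) (hv1 : 1 ≤ v) (hvN : v ≤ lam * m) :
    1 ≤ layerIdx m v ∧ layerIdx m v ≤ lam ∧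
      (layerIdx m v - 1) * m < v ∧ v ≤ layerIdx m v * m := by
  set i := layerIdx m v with hidef
  have hup : i * m ≤ v + m - 1 := Nat.div_mul_le_self _ m
  have hlow : v + m - 1 < (i + 1) * m := by
    have h0 : (v+m-1)/m < i + 1 := Nat.lt_succ_self i
    exact (Nat.div_lt_iff_lt_mul (by omega)).mp h0
  have hi1 : 1 ≤ i := by
    rw [hidef, layerIdx, Nat.le_div_iff_mul_le (by omega)]
    omega
  have hil : i ≤ lam := by
    by_contra h
    have h2 : lam + 1 ≤ i := by omega
    have h3 : (lam + 1) * m ≤ i * m := Nat.mul_le_mul_right m h2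
    have h4 : (lam+1)*m = lam*m + m := by ring
    omega
  have hid : i * m = (i-1) * m + m := by
    rw [Nat.sub_one_mul]
    have : m ≤ i * m := Nat.le_mul_of_pos_left m (by omega)
    omega
  have hsucc : (i+1)*m = i*m + m := by ring
  refine ⟨hi1, hil, by omega, by omega⟩

lemma layerIdx_eq (m i v : ℕ) (hm : 1 ≤ m) (hi : 1 ≤ i)
    (h1 : (i-1)*m < v) (h2 : v ≤ i*m) : layerIdx m v = i := by
  have hid : i * m = (i-1) * m + m := by
    rw [Nat.sub_one_mul]
    have : m ≤ i * m := Nat.le_mul_of_pos_left m (by omega)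
    omega
  apply le_antisymm
  · have h' : v + m - 1 < (i+1)*m := by
      have : (i+1)*m = i*m+m := by ring
      omega
    have h'' : (v+m-1)/m < i + 1 :=
      (Nat.div_lt_iff_lt_mul (show 0 < m by omega)).mpr h'
    rw [layerIdx]
    omega
  · rw [layerIdx, Nat.le_div_iff_mul_le (by omega)]
    omega


lemma part1 {Ω : Type*} [MeasureSpace Ω] [IsProbabilityMeasure (volume : Measure Ω)]
    (N lam : ℕ) (hlam : 1 ≤ lam) (hdvd : lam ∣ N) (hlamN : lam ≤ N)
    (r : ℕ → Ω → ℕ) (hmeas : ∀ v, Measurable (r v))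
    (hdist : ∀ v, 2 ≤ v → v ≤ N → ∀ j, 1 ≤ j → j ≤ v →
      (volume : Measure Ω) {ω | r v ω = j} =
        ENNReal.ofReal (Real.sqrt (1 - ((j : ℝ) - 1) / v) - Real.sqrt (1 - (j : ℝ) / v))) :
    ∀ i v, 1 ≤ i → i ≤ lam → (i-1) * (N/lam) < v → v ≤ i * (N/lam) →
      ((volume : Measure Ω) {ω | (i-1) * (N/lam) < r v ω ∧ r v ω < v}).toReal
        ≤ Real.sqrt (1 / (i : ℝ)) - Real.sqrt ((lam : ℝ) / ((i : ℝ) * N)) := by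
  intro i v h1 h2 h3 h4
  set m := N / lam with hmdef
  have hN0 : 0 < N := by omega
  have hNm : N = lam * m := (Nat.mul_div_cancel' hdvd).symm
  have hm1 : 1 ≤ m := (Nat.one_le_div_iff (by omega)).mpr hlamN
  set a := (i-1) * m with hadef
  have hi0 : (0:ℝ) < i := by exact_mod_cast h1
  have hi1 : (1:ℝ) ≤ i := by exact_mod_cast h1
  have hrhs : Real.sqrt ((lam:ℝ) / (i*N)) ≤ Real.sqrt (1/(i:ℝ)) := by
    apply Real.sqrt_le_sqrt
    rw [div_le_div_iff₀ (by positivity) hi0]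
    have : (lam:ℝ) ≤ N := by exact_mod_cast hlamN
    nlinarith
  rcases Nat.lt_or_ge v 2 with hv2 | hv2
  · have hv1 : v = 1 := by omega
    have ha0 : a = 0 := by omega
    have : {ω : Ω | a < r v ω ∧ r v ω < v} = ∅ := by
      ext ω; simp [hv1, ha0]; omega
    rw [this, measure_empty, ENNReal.toReal_zero]
    linarith
  · have hvN : v ≤ N := by
      calc v ≤ i * m := h4
        _ ≤ lam * m := Nat.mul_le_mul_right _ h2
        _ = N := hNm.symm
    have hv0 : (0:ℝ) < v := by
      have : 0 < v := by omega
      exact_mod_cast this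
    set g : ℕ → ℝ := fun j => Real.sqrt (1 - (j:ℝ)/v) with hgdef
    have hSeq : {ω : Ω | a < r v ω ∧ r v ω < v}
        = ⋃ j ∈ Finset.Ioo a v, {ω : Ω | r v ω = j} := by
      ext ω
      simp only [Set.mem_setOf_eq, Set.mem_iUnion, Finset.mem_Ioo, exists_prop]
      constructor
      · exact fun h => ⟨r v ω, h, rfl⟩
      · rintro ⟨j, hj, rfl⟩; exact hj
    have hμ : (volume : Measure Ω) {ω | a < r v ω ∧ r v ω < v}
        = ∑ j ∈ Finset.Ioo a v, (volume : Measure Ω) {ω | r v ω = j} := by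
      rw [hSeq]
      apply measure_biUnion_finset
      · intro x _ y _ hxy
        apply Set.disjoint_left.mpr
        intro ω hx hy
        exact hxy (hx ▸ hy ▸ rfl)
      · intro j _
        exact hmeas v (measurableSet_singleton j)
    have hterm : ∀ j ∈ Finset.Ioo a v,
        ((volume : Measure Ω) {ω | r v ω = j}).toReal = g (j-1) - g j := by
      intro j hj
      rw [Finset.mem_Ioo] at hj
      have hj1 : 1 ≤ j := by omega
      rw [hdist v hv2 hvN j hj1 (le_of_lt hj.2)]
      have hc : (((j-1:ℕ)):ℝ) = (j:ℝ) - 1 := by push_cast [hj1]; ring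
      have hnn : Real.sqrt (1 - (j:ℝ)/v) ≤ Real.sqrt (1 - ((j:ℝ)-1)/v) := by
        apply Real.sqrt_le_sqrt
        have : ((j:ℝ)-1)/v ≤ (j:ℝ)/v := by gcongr <;> linarith
        linarith
      rw [ENNReal.toReal_ofReal (by linarith)]
      simp only [hgdef, hc]
    rw [hμ, ENNReal.toReal_sum (fun j _ => measure_ne_top _ _),
      Finset.sum_congr rfl hterm]
    have hIoo : Finset.Ioo a v = Finset.Icc (a+1) (v-1) := by
      ext x; simp [Finset.mem_Ioo, Finset.mem_Icc]; omega
    rw [hIoo, teleAux g (a) (v-1) (by omega)]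
    have hima : i * m = a + m := by
      have hle : m ≤ i * m := Nat.le_mul_of_pos_left m (by omega)
      rw [hadef, Nat.sub_one_mul]
      omega
    have ha' : (a:ℝ) = ((i:ℝ)-1) * m := by
      have := congrArg (Nat.cast : ℕ → ℝ) hima
      push_cast at this
      linarith
    have hv4 : (v:ℝ) ≤ (i:ℝ) * m := by exact_mod_cast h4
    have hm' : (1:ℝ) ≤ m := by exact_mod_cast hm1
    have hN' : (N:ℝ) = lam * m := by exact_mod_cast hNm
    have hlam' : (1:ℝ) ≤ lam := by exact_mod_cast hlam
    have key1 : g a ≤ Real.sqrt (1/(i:ℝ)) := by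
      show Real.sqrt (1 - (a:ℝ)/v) ≤ _
      apply Real.sqrt_le_sqrt
      rw [show (1:ℝ) - (a:ℝ)/v = ((v:ℝ) - a)/v by field_simp]
      rw [div_le_div_iff₀ hv0 hi0]
      nlinarith [mul_nonneg (sub_nonneg.mpr hi1) (sub_nonneg.mpr hv4)]
    have hv1' : ((v-1:ℕ):ℝ) = (v:ℝ) - 1 := by
      push_cast [(by omega : 1 ≤ v)]; ring
    have key2 : Real.sqrt ((lam:ℝ)/((i:ℝ)*N)) ≤ g (v-1) := by
      show _ ≤ Real.sqrt (1 - ((v-1:ℕ):ℝ)/v)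
      apply Real.sqrt_le_sqrt
      rw [hv1', show (1:ℝ) - ((v:ℝ)-1)/v = 1/v by field_simp; ring]
      rw [div_le_div_iff₀ (by positivity) hv0]
      nlinarith [mul_le_mul_of_nonneg_left hv4 (by linarith : (0:ℝ) ≤ lam)]
    linarith


lemma sqrtLeSelf {x : ℝ} (h : 1 ≤ x) : Real.sqrt x ≤ x := by
  calc Real.sqrt x ≤ Real.sqrt (x^2) := Real.sqrt_le_sqrt (by nlinarith)
    _ = x := Real.sqrt_sq (by linarith)

lemma part3 (N lam : ℕ) (hlam : 1 ≤ lam) (hlamN : lam ≤ N) :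
    ((N : ℝ)/lam - Real.sqrt ((N : ℝ)/lam)) * (2 * Real.sqrt lam - 1)
      ≤ 2 * N / Real.sqrt lam := by
  have hl0 : (0:ℝ) < lam := by exact_mod_cast hlam
  have hN0 : (0:ℝ) < N := by exact_mod_cast (by omega : 0 < N)
  have hsl0 : (0:ℝ) < Real.sqrt lam := Real.sqrt_pos.mpr hl0
  have hsl1 : (1:ℝ) ≤ Real.sqrt lam := by
    rw [show (1:ℝ) = Real.sqrt 1 by simp]
    exact Real.sqrt_le_sqrt (by exact_mod_cast hlam)
  have hss : Real.sqrt lam * Real.sqrt lam = (lam:ℝ) := Real.mul_self_sqrt (le_of_lt hl0)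
  have hM1 : (1:ℝ) ≤ (N:ℝ)/lam := (one_le_div hl0).mpr (by exact_mod_cast hlamN)
  have hsM : Real.sqrt ((N:ℝ)/lam) ≤ (N:ℝ)/lam := sqrtLeSelf hM1
  have hsMnn : 0 ≤ Real.sqrt ((N:ℝ)/lam) := Real.sqrt_nonneg _
  have e : 2 * (N:ℝ) / Real.sqrt lam = 2 * ((N:ℝ)/lam) * Real.sqrt lam := by
    rw [div_eq_iff (ne_of_gt hsl0), mul_assoc, hss]
    field_simp
  rw [e]
  nlinarith [mul_nonneg hsMnn (le_of_lt hsl0), hM1]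

lemma part2 {Ω : Type*} [MeasureSpace Ω] [IsProbabilityMeasure (volume : Measure Ω)]
    (N lam : ℕ) (hlam : 1 ≤ lam) (hdvd : lam ∣ N) (hlamN : lam ≤ N)
    (r : ℕ → Ω → ℕ) (hmeas : ∀ v, Measurable (r v))
    (hdist : ∀ v, 2 ≤ v → v ≤ N → ∀ j, 1 ≤ j → j ≤ v →
      (volume : Measure Ω) {ω | r v ω = j} =
        ENNReal.ofReal (Real.sqrt (1 - ((j : ℝ) - 1) / v) - Real.sqrt (1 - (j : ℝ) / v))) :
    (∫ ω, (((Finset.Icc 1 N).filter fun v =>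
        (layerIdx (N/lam) v - 1) * (N/lam) < r v ω ∧ r v ω < v).card : ℝ)
          ∂(volume : Measure Ω)
      ≤ ((N : ℝ)/lam - Real.sqrt ((N : ℝ)/lam)) * (2 * Real.sqrt lam - 1)) := by
  have hN0 : 0 < N := by omega
  have hNm : N = lam * (N/lam) := (Nat.mul_div_cancel' hdvd).symm
  have hm1 : 1 ≤ N/lam := (Nat.one_le_div_iff (by omega)).mpr hlamN
  set m := N / lam with hmdef
  set S : ℕ → Set Ω := fun v => {ω | (layerIdx m v - 1) * m < r v ω ∧ r v ω < v}
    with hSdef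
  have hSm : ∀ v, MeasurableSet (S v) := by
    intro v
    have he : S v = r v ⁻¹' {n | (layerIdx m v - 1) * m < n ∧ n < v} := rfl
    rw [he]
    exact hmeas v (MeasurableSpace.measurableSet_top)
  have hfun : ∀ ω : Ω, (((Finset.Icc 1 N).filter fun v =>
      (layerIdx m v - 1) * m < r v ω ∧ r v ω < v).card : ℝ)
      = ∑ v ∈ Finset.Icc 1 N, Set.indicator (S v) (fun _ => (1:ℝ)) ω := by
    intro ω
    rw [Finset.card_filter]
    push_cast
    refine Finset.sum_congr rfl fun v _ => ?_
    by_cases h : (layerIdx m v - 1) * m < r v ω ∧ r v ω < v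
    · rw [if_pos h]
      exact (Set.indicator_of_mem (show ω ∈ S v from h) (fun _ => (1:ℝ))).symm
    · rw [if_neg h]
      exact (Set.indicator_of_notMem (show ω ∉ S v from h) (fun _ => (1:ℝ))).symm
  simp only [hfun]
  rw [integral_finset_sum _ (fun v _ => (integrable_const (1:ℝ)).indicator (hSm v))]
  have hint : ∀ v ∈ Finset.Icc 1 N,
      ∫ ω, Set.indicator (S v) (fun _ => (1:ℝ)) ω ∂(volume : Measure Ω)
        = ((volume : Measure Ω) (S v)).toReal := by
    intro v _
    rw [integral_indicator_const (1:ℝ) (hSm v)]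
    simp [measureReal_def]
  rw [Finset.sum_congr rfl hint]
  have hbound : ∀ v ∈ Finset.Icc 1 N, ((volume : Measure Ω) (S v)).toReal
      ≤ Real.sqrt (1/(layerIdx m v : ℝ)) - Real.sqrt ((lam:ℝ)/((layerIdx m v : ℝ)*N)) := by
    intro v hv
    rw [Finset.mem_Icc] at hv
    obtain ⟨f1, f2, f3, f4⟩ := layerFacts m lam v hm1 hv.1 (by omega)
    exact part1 N lam hlam hdvd hlamN r hmeas hdist (layerIdx m v) v f1 f2 f3 f4
  refine le_trans (Finset.sum_le_sum hbound) ?_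
  have hl0 : (0:ℝ) < lam := by exact_mod_cast hlam
  have hN' : (N:ℝ) = (lam:ℝ) * (m:ℝ) := by exact_mod_cast hNm
  have hMm : (N:ℝ)/lam = (m:ℝ) := by rw [hN']; field_simp
  have hpart : Finset.Icc 1 N = (Finset.Icc 1 lam).biUnion
      (fun i => Finset.Ioc ((i-1)*m) (i*m)) := by
    ext v
    simp only [Finset.mem_Icc, Finset.mem_biUnion, Finset.mem_Ioc]
    constructor
    · rintro ⟨hv1, hvN⟩
      obtain ⟨f1, f2, f3, f4⟩ := layerFacts m lam v hm1 hv1 (by omega)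
      exact ⟨layerIdx m v, ⟨f1, f2⟩, f3, f4⟩
    · rintro ⟨i, ⟨hi1, hil⟩, hlo, hhi⟩
      have : i*m ≤ lam*m := Nat.mul_le_mul_right m hil
      omega
  have hdisjkey : ∀ x y : ℕ, x < y →
      Disjoint (Finset.Ioc ((x-1)*m) (x*m)) (Finset.Ioc ((y-1)*m) (y*m)) := by
    intro x y hxy
    rw [Finset.disjoint_left]
    intro v hv1 hv2
    rw [Finset.mem_Ioc] at hv1 hv2
    have : x*m ≤ (y-1)*m := Nat.mul_le_mul_right m (by omega)
    omega
  rw [hpart, Finset.sum_biUnion ?hd]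
  case hd =>
    intro x hx y hy hxy
    rcases lt_or_gt_of_ne hxy with h | h
    · exact hdisjkey x y h
    · exact (hdisjkey y x h).symm
  have hinner : ∀ i ∈ Finset.Icc 1 lam,
      (∑ v ∈ Finset.Ioc ((i-1)*m) (i*m),
        (Real.sqrt (1/(layerIdx m v : ℝ)) - Real.sqrt ((lam:ℝ)/((layerIdx m v : ℝ)*N))))
        = ((N:ℝ)/lam - Real.sqrt ((N:ℝ)/lam)) * (Real.sqrt i)⁻¹ := by
    intro i hi
    rw [Finset.mem_Icc] at hi
    have hi0 : (0:ℝ) < i := by exact_mod_cast hi.1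
    have hm0 : (0:ℝ) < m := by exact_mod_cast hm1
    have hsm0 : (0:ℝ) < Real.sqrt m := Real.sqrt_pos.mpr hm0
    have hsi0 : (0:ℝ) < Real.sqrt i := Real.sqrt_pos.mpr hi0
    have hmm : Real.sqrt m * Real.sqrt m = (m:ℝ) := Real.mul_self_sqrt (le_of_lt hm0)
    have hconst : ∀ v ∈ Finset.Ioc ((i-1)*m) (i*m),
        (Real.sqrt (1/(layerIdx m v : ℝ)) - Real.sqrt ((lam:ℝ)/((layerIdx m v : ℝ)*N)))
          = (Real.sqrt (1/(i : ℝ)) - Real.sqrt ((lam:ℝ)/((i : ℝ)*N))) := by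
      intro v hv
      rw [Finset.mem_Ioc] at hv
      rw [layerIdx_eq m i v hm1 hi.1 hv.1 hv.2]
    rw [Finset.sum_congr rfl hconst, Finset.sum_const, Nat.card_Ioc]
    have hcard : i*m - (i-1)*m = m := by
      rw [Nat.sub_one_mul]
      have : m ≤ i*m := Nat.le_mul_of_pos_left m (by omega)
      omega
    rw [hcard, nsmul_eq_mul, hMm]
    rw [show (lam:ℝ)/((i:ℝ)*N) = ((i:ℝ)*m)⁻¹ by rw [hN']; field_simp]
    rw [one_div, Real.sqrt_inv, Real.sqrt_inv, Real.sqrt_mul (le_of_lt hi0)]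
    have hkey : (m:ℝ) * (Real.sqrt i * Real.sqrt m)⁻¹ = Real.sqrt m * (Real.sqrt i)⁻¹ := by
      rw [← div_eq_mul_inv, ← div_eq_mul_inv, div_eq_div_iff (by positivity) (ne_of_gt hsi0)]
      linear_combination (-(Real.sqrt i)) * hmm
    rw [mul_sub, hkey, sub_mul]
  rw [Finset.sum_congr rfl hinner, ← Finset.mul_sum]
  have hM1 : (1:ℝ) ≤ (N:ℝ)/lam := (one_le_div hl0).mpr (by exact_mod_cast hlamN)
  have hnn : (0:ℝ) ≤ (N:ℝ)/lam - Real.sqrt ((N:ℝ)/lam) :=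
    sub_nonneg.mpr (sqrtLeSelf hM1)
  exact mul_le_mul_of_nonneg_left (sumInvSqrt lam hlam) hnn

/-- For the Argon2i-B parent distribution `Pr[r(v)=j] = √(1-(j-1)/v) - √(1-j/v)`:
a node `v` in layer `i` (layers of size `N/λ`) has its random parent in the same layer
with probability at most `√(1/i) - √(λ/(iN))`; the expected number of such nodes is at
most `(N/λ - √(N/λ))·(2√λ - 1) ≤ 2N/√λ`. -/
theorem stmt16 {Ω : Type*} [MeasureSpace Ω] [IsProbabilityMeasure (volume : Measure Ω)]
    (N lam : ℕ) (hlam : 1 ≤ lam) (hdvd : lam ∣ N) (hlamN : lam ≤ N)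
    (r : ℕ → Ω → ℕ) (hmeas : ∀ v, Measurable (r v))
    (hdist : ∀ v, 2 ≤ v → v ≤ N → ∀ j, 1 ≤ j → j ≤ v →
      (volume : Measure Ω) {ω | r v ω = j} =
        ENNReal.ofReal (Real.sqrt (1 - ((j : ℝ) - 1) / v) - Real.sqrt (1 - (j : ℝ) / v))) :
    (∀ i v, 1 ≤ i → i ≤ lam → (i-1) * (N/lam) < v → v ≤ i * (N/lam) →
      ((volume : Measure Ω) {ω | (i-1) * (N/lam) < r v ω ∧ r v ω < v}).toReal
        ≤ Real.sqrt (1 / (i : ℝ)) - Real.sqrt ((lam : ℝ) / ((i : ℝ) * N))) ∧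
    (∫ ω, (((Finset.Icc 1 N).filter fun v =>
        (layerIdx (N/lam) v - 1) * (N/lam) < r v ω ∧ r v ω < v).card : ℝ)
          ∂(volume : Measure Ω)
      ≤ ((N : ℝ)/lam - Real.sqrt ((N : ℝ)/lam)) * (2 * Real.sqrt lam - 1)) ∧
    (((N : ℝ)/lam - Real.sqrt ((N : ℝ)/lam)) * (2 * Real.sqrt lam - 1)
      ≤ 2 * N / Real.sqrt lam) := by
  exact ⟨part1 N lam hlam hdvd hlamN r hmeas hdist,
    part2 N lam hlam hdvd hlamN r hmeas hdist, part3 N lam hlam hlamN⟩
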